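/- Let A = K[[f_1,…,f_s]] ⊆ F = K[[x_1,…,x_n]] with the length of F/A as an A-module finite, let a ∈ (ℝ_{>0})^n, and let {g_1,…,g_r} be an a-reduced canonical basis of A. Then in(A,a) = K[[in(g_1,a),…,in(g_r,a)]], i.e., the a-initial algebra of A is generated (as a closed K-subalgebra) by the a-initial forms of the elements of the reduced canonical basis. -/

import Mathlib

noncomputable section

namespace CanonicalFan

open MvPowerSeries

variable (K : Type*) [Field K] (n : ℕ)

/-- The weight `⟨a, α⟩ = ∑ i, a i * α i` of an exponent `α` with respect to `a`. -/
def weight (a : Fin n → ℝ) (α : Fin n →₀ ℕ) : ℝ := ∑ i, a i * (α i : ℝ)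

/-- The support of a formal power series. -/
def supp (f : MvPowerSeries (Fin n) K) : Set (Fin n →₀ ℕ) :=
  {α | MvPowerSeries.coeff α f ≠ 0}

/-- The `a`-valuation `ν(f,a)`, with the convention `ν(0,a) = +∞`. -/
def nu (a : Fin n → ℝ) (f : MvPowerSeries (Fin n) K) : EReal :=
  sInf ((fun α => ((weight n a α : ℝ) : EReal)) '' supp K n f)

open Classical in
/-- The `a`-initial form `in(f,a)` of a power series. -/
def initialForm (a : Fin n → ℝ) (f : MvPowerSeries (Fin n) K) :
    MvPowerSeries (Fin n) K :=
  fun α => if ((weight n a α : ℝ) : EReal) = nu K n a f then MvPowerSeries.coeff α f else 0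

open Classical in
/-- `exp(f,a)`: the `≺`-maximal element of the support of `in(f,a)`, where `≺` is the
well-ordering `r` (junk value `0` if no maximal element exists). -/
def exponent (r : (Fin n →₀ ℕ) → (Fin n →₀ ℕ) → Prop) (a : Fin n → ℝ)
    (f : MvPowerSeries (Fin n) K) : Fin n →₀ ℕ :=
  if h : ∃ β ∈ supp K n (initialForm K n a f),
      ∀ γ ∈ supp K n (initialForm K n a f), γ = β ∨ r γ β
  then h.choose else 0

/-- The `a`-leading monomial `M(f,a) = c_{exp(f,a)} x^{exp(f,a)}`. -/
def leadMon (r : (Fin n →₀ ℕ) → (Fin n →₀ ℕ) → Prop) (a : Fin n → ℝ)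
    (f : MvPowerSeries (Fin n) K) : MvPowerSeries (Fin n) K :=
  MvPowerSeries.monomial (exponent K n r a f)
    (MvPowerSeries.coeff (exponent K n r a f) f)

/-- The maximal ideal `(x_1, …, x_n)` of `K[[x_1,…,x_n]]`. -/
def mIdeal : Ideal (MvPowerSeries (Fin n) K) :=
  Ideal.span (Set.range (MvPowerSeries.X : Fin n → MvPowerSeries (Fin n) K))

/-- `K[[S]]`: the smallest `K`-subalgebra of `K[[x_1,…,x_n]]` containing `S` and closed in
the `(x_1,…,x_n)`-adic topology; concretely, the adic closure of `Algebra.adjoin K S`. -/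
def closedAdjoin (S : Set (MvPowerSeries (Fin n) K)) :
    Subalgebra K (MvPowerSeries (Fin n) K) where
  carrier := {f | ∀ N : ℕ, ∃ g ∈ Algebra.adjoin K S, f - g ∈ (mIdeal K n) ^ N}
  algebraMap_mem' c N :=
    ⟨algebraMap K _ c, Subalgebra.algebraMap_mem _ c, by simp [Ideal.zero_mem]⟩
  add_mem' {f g} hf hg N := by
    obtain ⟨p, hp, hfp⟩ := hf N
    obtain ⟨q, hq, hgq⟩ := hg N
    exact ⟨p + q, add_mem hp hq, by simpa [add_sub_add_comm] using Ideal.add_mem _ hfp hgq⟩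
  mul_mem' {f g} hf hg N := by
    obtain ⟨p, hp, hfp⟩ := hf N
    obtain ⟨q, hq, hgq⟩ := hg N
    refine ⟨p * q, mul_mem hp hq, ?_⟩
    have h : f * g - p * q = f * (g - q) + (f - p) * q := by ring
    rw [h]
    exact Ideal.add_mem _ (Ideal.mul_mem_left _ _ hgq) (Ideal.mul_mem_right _ _ hfp)

/-- `exp(A,a) = {exp(f,a) : f ∈ A, f ≠ 0}`. -/
def expSet (r : (Fin n →₀ ℕ) → (Fin n →₀ ℕ) → Prop) (a : Fin n → ℝ)
    (A : Set (MvPowerSeries (Fin n) K)) : Set (Fin n →₀ ℕ) :=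
  {β | ∃ f ∈ A, f ≠ 0 ∧ exponent K n r a f = β}

/-- `in(A,a) = K[[in(f,a) : f ∈ A ∖ {0}]]`. -/
def inAlgebra (a : Fin n → ℝ) (A : Set (MvPowerSeries (Fin n) K)) :
    Subalgebra K (MvPowerSeries (Fin n) K) :=
  closedAdjoin K n {g | ∃ f ∈ A, f ≠ 0 ∧ initialForm K n a f = g}

/-- `M(A,a) = K[[M(f,a) : f ∈ A ∖ {0}]]`. -/
def leadAlgebra (r : (Fin n →₀ ℕ) → (Fin n →₀ ℕ) → Prop) (a : Fin n → ℝ)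
    (A : Set (MvPowerSeries (Fin n) K)) : Subalgebra K (MvPowerSeries (Fin n) K) :=
  closedAdjoin K n {g | ∃ f ∈ A, f ≠ 0 ∧ leadMon K n r a f = g}

set_option synthInstance.maxHeartbeats 1000000 in
/-- The length of `F/A` as an `A`-module is finite. -/
def FiniteColength (A : Subalgebra K (MvPowerSeries (Fin n) K)) : Prop :=
  IsFiniteLength A
    (MvPowerSeries (Fin n) K ⧸ LinearMap.range (Algebra.linearMap A (MvPowerSeries (Fin n) K)))

/-- `{g_1,…,g_r}` is an `a`-canonical basis of `A`. -/
def IsCanonicalBasis (r : (Fin n →₀ ℕ) → (Fin n →₀ ℕ) → Prop) (a : Fin n → ℝ)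
    (A : Subalgebra K (MvPowerSeries (Fin n) K)) {m : ℕ}
    (g : Fin m → MvPowerSeries (Fin n) K) : Prop :=
  (∀ i, g i ∈ A ∧ g i ≠ 0) ∧
    leadAlgebra K n r a (A : Set (MvPowerSeries (Fin n) K)) =
      closedAdjoin K n (Set.range fun i => leadMon K n r a (g i))

/-- `{g_1,…,g_r}` is a minimal `a`-canonical basis of `A`. -/
def IsMinimalCanonicalBasis (r : (Fin n →₀ ℕ) → (Fin n →₀ ℕ) → Prop) (a : Fin n → ℝ)
    (A : Subalgebra K (MvPowerSeries (Fin n) K)) {m : ℕ}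
    (g : Fin m → MvPowerSeries (Fin n) K) : Prop :=
  IsCanonicalBasis K n r a A g ∧
    ∀ T : Set (MvPowerSeries (Fin n) K),
      T ⊂ Set.range (fun i => leadMon K n r a (g i)) →
        closedAdjoin K n T ≠ leadAlgebra K n r a (A : Set (MvPowerSeries (Fin n) K))

/-- `{g_1,…,g_r}` is the `a`-reduced canonical basis of `A`. -/
def IsReducedCanonicalBasis (r : (Fin n →₀ ℕ) → (Fin n →₀ ℕ) → Prop) (a : Fin n → ℝ)
    (A : Subalgebra K (MvPowerSeries (Fin n) K)) {m : ℕ}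
    (g : Fin m → MvPowerSeries (Fin n) K) : Prop :=
  IsMinimalCanonicalBasis K n r a A g ∧
    (∀ i, MvPowerSeries.coeff (exponent K n r a (g i)) (g i) = 1) ∧
    ∀ i, ∀ α ∈ supp K n (g i - leadMon K n r a (g i)),
      (MvPowerSeries.monomial α (1 : K)) ∉
        closedAdjoin K n (Set.range fun j => leadMon K n r a (g j))

/-- A power series is a (nonzero) monomial. -/
def IsMonomial (g : MvPowerSeries (Fin n) K) : Prop :=
  ∃ (α : Fin n →₀ ℕ) (c : K), c ≠ 0 ∧ g = MvPowerSeries.monomial α c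

/-!
For `f ∈ A` we show `in(f,a) ∈ K[in(g_1,a), …, in(g_r,a)]` by well-founded induction on
`exp(f,a)`. Since `M(f,a) ∈ K[[M(g_i,a)]]` and every element of `K[M(g_i,a)]` is supported on the
monoid generated by the `exp(g_i,a)`, truncating at a high enough degree gives
`exp(f,a) = Σ e_i exp(g_i,a)`. As `in(·,a)` is multiplicative and `exp(·,a)` is additive on
products, `h = c ∏ g_i ^ e_i ∈ A` has, for a suitable `c ∈ K`, the same leading term as `f`, and
`in(h,a) = c ∏ in(g_i,a) ^ e_i`. Either `in(f,a) = in(h,a)`, or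
`in(f,a) = in(h,a) + in(f - h,a)` with `exp(f - h,a) ≺ exp(f,a)`.
-/

variable {K n}

section Weight

variable {a : Fin n → ℝ}

lemma weight_add (α β : Fin n →₀ ℕ) : weight n a (α + β) = weight n a α + weight n a β := by
  simp [weight, mul_add, Finset.sum_add_distrib]

lemma weight_zero : weight n a 0 = 0 := by simp [weight]

lemma finite_setOf_weight_le (ha : ∀ i, 0 < a i) (d : ℝ) :
    {α : Fin n →₀ ℕ | weight n a α ≤ d}.Finite := by
  obtain ⟨x, hx⟩ := Finite.exists_le fun i => d / a i
  obtain ⟨C, hC⟩ := exists_nat_ge x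
  refine (Set.finite_Iic (Finsupp.equivFunOnFinite.symm fun _ => C)).subset fun α hα i => ?_
  have hi : a i * α i ≤ weight n a α :=
    Finset.single_le_sum (f := fun j => a j * (α j : ℝ))
      (fun j _ => mul_nonneg (ha j).le (Nat.cast_nonneg _)) (Finset.mem_univ i)
  have : (α i : ℝ) ≤ C :=
    calc (α i : ℝ) ≤ d / a i := by rw [le_div_iff₀ (ha i)]; linarith [hα.out]
      _ ≤ C := (hx i).trans hC
  exact_mod_cast this

end Weight

section Support

lemma mem_supp {f : MvPowerSeries (Fin n) K} {α : Fin n →₀ ℕ} :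
    α ∈ supp K n f ↔ coeff α f ≠ 0 := Iff.rfl

lemma supp_nonempty {f : MvPowerSeries (Fin n) K} (hf : f ≠ 0) : (supp K n f).Nonempty := by
  simpa [Set.Nonempty, mem_supp] using (ne_zero_iff_exists_coeff_ne_zero f).1 hf

lemma supp_smul {c : K} (hc : c ≠ 0) (f : MvPowerSeries (Fin n) K) :
    supp K n (c • f) = supp K n f := by
  ext α
  simp [mem_supp, hc]

lemma mem_supp_or_of_mem_supp_add {f g : MvPowerSeries (Fin n) K} {α : Fin n →₀ ℕ}
    (h : α ∈ supp K n (f + g)) : α ∈ supp K n f ∨ α ∈ supp K n g := by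
  by_contra! hfg
  simp_all [mem_supp]

lemma mem_supp_or_of_mem_supp_sub {f g : MvPowerSeries (Fin n) K} {α : Fin n →₀ ℕ}
    (h : α ∈ supp K n (f - g)) : α ∈ supp K n f ∨ α ∈ supp K n g := by
  by_contra! hfg
  simp_all [mem_supp]

lemma exists_add_eq_of_mem_supp_mul {f g : MvPowerSeries (Fin n) K} {α : Fin n →₀ ℕ}
    (h : α ∈ supp K n (f * g)) : ∃ β ∈ supp K n f, ∃ γ ∈ supp K n g, β + γ = α := by
  classical
  rw [mem_supp, coeff_mul] at h
  obtain ⟨⟨β, γ⟩, hβγ, hne⟩ := Finset.exists_ne_zero_of_sum_ne_zero h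
  exact ⟨β, left_ne_zero_of_mul hne, γ, right_ne_zero_of_mul hne,
    Finset.HasAntidiagonal.mem_antidiagonal.1 hβγ⟩

lemma eq_of_mem_supp_monomial {α β : Fin n →₀ ℕ} {c : K}
    (h : β ∈ supp K n (monomial α c)) : β = α := by
  classical
  by_contra hne
  exact h (by rw [coeff_monomial, if_neg hne])

end Support

section InitialForm

variable {a : Fin n → ℝ} {f : MvPowerSeries (Fin n) K} {α : Fin n →₀ ℕ}

/-- `ν(f,a)` as a real number; the junk value for `f = 0` is `0`. -/
def ord (a : Fin n → ℝ) (f : MvPowerSeries (Fin n) K) : ℝ := (nu K n a f).toReal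

lemma nu_le_weight (h : α ∈ supp K n f) : nu K n a f ≤ weight n a α :=
  sInf_le ⟨α, h, rfl⟩

lemma nu_eq_weight (hα : α ∈ supp K n f)
    (hmin : ∀ β ∈ supp K n f, weight n a α ≤ weight n a β) : nu K n a f = weight n a α :=
  le_antisymm (nu_le_weight hα) <|
    le_sInf <| by rintro _ ⟨β, hβ, rfl⟩; exact EReal.coe_le_coe_iff.2 (hmin β hβ)

lemma ord_eq_weight (hα : α ∈ supp K n f)
    (hmin : ∀ β ∈ supp K n f, weight n a α ≤ weight n a β) : ord a f = weight n a α := by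
  rw [ord, nu_eq_weight hα hmin, EReal.toReal_coe]

lemma exists_mem_supp_forall_weight_le (ha : ∀ i, 0 < a i) (hf : f ≠ 0) :
    ∃ α ∈ supp K n f, ∀ β ∈ supp K n f, weight n a α ≤ weight n a β := by
  obtain ⟨α₁, hα₁⟩ := supp_nonempty hf
  obtain ⟨α, ⟨hα, hαα₁⟩, hmin⟩ := Set.exists_min_image
    {β | β ∈ supp K n f ∧ weight n a β ≤ weight n a α₁} (weight n a)
    ((finite_setOf_weight_le ha _).subset fun _ h => h.2) ⟨α₁, hα₁, le_rfl⟩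
  refine ⟨α, hα, fun β hβ => ?_⟩
  by_cases hβα₁ : weight n a β ≤ weight n a α₁
  · exact hmin β ⟨hβ, hβα₁⟩
  · exact hαα₁.trans (le_of_not_ge hβα₁)

lemma coe_ord (ha : ∀ i, 0 < a i) (hf : f ≠ 0) : (ord a f : EReal) = nu K n a f := by
  obtain ⟨α, hα, hmin⟩ := exists_mem_supp_forall_weight_le ha hf
  rw [ord, nu_eq_weight hα hmin, EReal.toReal_coe]

lemma ord_le_weight (ha : ∀ i, 0 < a i) (h : α ∈ supp K n f) : ord a f ≤ weight n a α := by
  have hf : f ≠ 0 := by rintro rfl; exact h (map_zero _)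
  exact EReal.coe_le_coe_iff.1 ((coe_ord ha hf).trans_le (nu_le_weight h))

lemma exists_mem_supp_weight_eq_ord (ha : ∀ i, 0 < a i) (hf : f ≠ 0) :
    ∃ α ∈ supp K n f, weight n a α = ord a f := by
  obtain ⟨α, hα, hmin⟩ := exists_mem_supp_forall_weight_le ha hf
  exact ⟨α, hα, (ord_eq_weight hα hmin).symm⟩

lemma coeff_initialForm (ha : ∀ i, 0 < a i) (f : MvPowerSeries (Fin n) K) (α : Fin n →₀ ℕ) :
    coeff α (initialForm K n a f) = if weight n a α = ord a f then coeff α f else 0 := by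
  show (if _ then _ else _) = _
  rcases eq_or_ne f 0 with rfl | hf
  · simp
  · simp only [← coe_ord ha hf, EReal.coe_eq_coe_iff]

lemma initialForm_zero : initialForm K n a 0 = 0 := by
  ext α
  show (if _ then _ else _) = _
  simp

lemma mem_supp_initialForm (ha : ∀ i, 0 < a i) :
    α ∈ supp K n (initialForm K n a f) ↔ α ∈ supp K n f ∧ weight n a α = ord a f := by
  rw [mem_supp, coeff_initialForm ha]
  split_ifs with h <;> simp [h, mem_supp]

lemma supp_initialForm_finite (ha : ∀ i, 0 < a i) (f : MvPowerSeries (Fin n) K) :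
    (supp K n (initialForm K n a f)).Finite :=
  (finite_setOf_weight_le ha (ord a f)).subset fun _ h => ((mem_supp_initialForm ha).1 h).2.le

lemma initialForm_ne_zero (ha : ∀ i, 0 < a i) (hf : f ≠ 0) : initialForm K n a f ≠ 0 := by
  obtain ⟨α, hα, hw⟩ := exists_mem_supp_weight_eq_ord ha hf
  intro h0
  exact ((mem_supp_initialForm ha).2 ⟨hα, hw⟩) (by rw [h0, map_zero])

lemma initialForm_smul (c : K) (f : MvPowerSeries (Fin n) K) :
    initialForm K n a (c • f) = c • initialForm K n a f := by
  rcases eq_or_ne c 0 with rfl | hc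
  · rw [zero_smul, zero_smul, initialForm_zero]
  have hnu : nu K n a (c • f) = nu K n a f := by rw [nu, nu, supp_smul hc]
  ext α
  show (if _ then _ else _) = c * (if _ then _ else _)
  rw [hnu, mul_ite, mul_zero, coeff_smul]

end InitialForm

section Mul

variable {a : Fin n → ℝ} (ha : ∀ i, 0 < a i) {f g : MvPowerSeries (Fin n) K}
  {α : Fin n →₀ ℕ}
include ha

lemma coeff_mul_eq_zero_of_weight_lt (hα : weight n a α < ord a f + ord a g) :
    coeff α (f * g) = 0 := by
  classical
  rw [coeff_mul]
  refine Finset.sum_eq_zero fun ⟨β, γ⟩ hβγ => ?_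
  rw [Finset.HasAntidiagonal.mem_antidiagonal] at hβγ
  by_contra hne
  have hβ := ord_le_weight ha (left_ne_zero_of_mul hne)
  have hγ := ord_le_weight ha (right_ne_zero_of_mul hne)
  rw [← hβγ, weight_add] at hα
  linarith

lemma coeff_mul_eq_coeff_initialForm_mul (hα : weight n a α = ord a f + ord a g) :
    coeff α (f * g) = coeff α (initialForm K n a f * initialForm K n a g) := by
  classical
  rw [coeff_mul, coeff_mul]
  refine Finset.sum_congr rfl fun ⟨β, γ⟩ hβγ => ?_
  rw [Finset.HasAntidiagonal.mem_antidiagonal] at hβγ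
  simp only [coeff_initialForm ha]
  by_cases hβ : coeff β f = 0
  · simp [hβ]
  by_cases hγ : coeff γ g = 0
  · simp [hγ]
  have := ord_le_weight ha hβ
  have := ord_le_weight ha hγ
  rw [← hβγ, weight_add] at hα
  rw [if_pos (by linarith), if_pos (by linarith)]

lemma weight_eq_of_mem_supp_initialForm_mul
    (hα : α ∈ supp K n (initialForm K n a f * initialForm K n a g)) :
    weight n a α = ord a f + ord a g := by
  obtain ⟨β, hβ, γ, hγ, rfl⟩ := exists_add_eq_of_mem_supp_mul hα
  rw [weight_add, ((mem_supp_initialForm ha).1 hβ).2, ((mem_supp_initialForm ha).1 hγ).2]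

lemma ord_mul (hf : f ≠ 0) (hg : g ≠ 0) : ord a (f * g) = ord a f + ord a g := by
  -- `K⟦X⟧` is a domain, so the product of the initial forms is nonzero; its terms have weight
  -- `ord f + ord g`.
  obtain ⟨α, hα⟩ :=
    supp_nonempty (mul_ne_zero (initialForm_ne_zero ha hf) (initialForm_ne_zero ha hg))
  have hw := weight_eq_of_mem_supp_initialForm_mul ha hα
  have hα' : α ∈ supp K n (f * g) := by
    rwa [mem_supp, coeff_mul_eq_coeff_initialForm_mul ha hw]
  rw [ord_eq_weight hα' fun β hβ => ?_, hw]
  by_contra! hlt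
  exact hβ (coeff_mul_eq_zero_of_weight_lt ha (hw ▸ hlt))

lemma initialForm_mul (f g : MvPowerSeries (Fin n) K) :
    initialForm K n a (f * g) = initialForm K n a f * initialForm K n a g := by
  rcases eq_or_ne f 0 with rfl | hf
  · rw [zero_mul, initialForm_zero, zero_mul]
  rcases eq_or_ne g 0 with rfl | hg
  · rw [mul_zero, initialForm_zero, mul_zero]
  ext α
  rw [coeff_initialForm ha, ord_mul ha hf hg]
  split_ifs with hα
  · exact coeff_mul_eq_coeff_initialForm_mul ha hα
  · by_contra hne
    exact hα (weight_eq_of_mem_supp_initialForm_mul ha (Ne.symm hne))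

lemma initialForm_one : initialForm K n a 1 = 1 := by
  classical
  have h0 : (0 : Fin n →₀ ℕ) ∈ supp K n (1 : MvPowerSeries (Fin n) K) := by simp [mem_supp]
  have hord : ord a (1 : MvPowerSeries (Fin n) K) = 0 := by
    rw [ord_eq_weight h0 fun β hβ => ?_, weight_zero]
    rw [mem_supp, coeff_one] at hβ
    obtain rfl : β = 0 := by by_contra h; exact hβ (if_neg h)
    exact le_rfl
  ext α
  rw [coeff_initialForm ha, hord, coeff_one]
  split_ifs with h₁ h₂ <;> simp_all [weight_zero]

lemma initialForm_sub_of_ord_eq (hord : ord a f = ord a g)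
    (hne : initialForm K n a f ≠ initialForm K n a g) :
    initialForm K n a (f - g) = initialForm K n a f - initialForm K n a g := by
  have hle : ∀ β ∈ supp K n (f - g), ord a f ≤ weight n a β := fun β hβ =>
    (mem_supp_or_of_mem_supp_sub hβ).elim (ord_le_weight ha) (hord ▸ ord_le_weight ha)
  obtain ⟨α, hα⟩ := supp_nonempty (sub_ne_zero.2 hne)
  have hw : weight n a α = ord a f := by
    rcases mem_supp_or_of_mem_supp_sub hα with h | h
    · exact ((mem_supp_initialForm ha).1 h).2
    · exact hord ▸ ((mem_supp_initialForm ha).1 h).2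
  have hα' : α ∈ supp K n (f - g) := by
    simpa [mem_supp, coeff_initialForm ha, hw, hord] using hα
  have hord' : ord a (f - g) = ord a f := by
    rw [ord_eq_weight hα' fun β hβ => hw ▸ hle β hβ, hw]
  ext β
  simp only [map_sub, coeff_initialForm ha, hord', hord]
  split_ifs <;> simp

end Mul

section Greatest

variable {α : Type*} {r : α → α → Prop}

def IsGreatestWrt (r : α → α → Prop) (S : Set α) (β : α) : Prop :=
  β ∈ S ∧ ∀ γ ∈ S, γ = β ∨ r γ β

lemma IsGreatestWrt.unique [IsStrictOrder α r] {S : Set α} {β β' : α}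
    (h : IsGreatestWrt r S β) (h' : IsGreatestWrt r S β') : β = β' := by
  rcases h.2 β' h'.1 with rfl | hlt
  · rfl
  rcases h'.2 β h.1 with rfl | hlt'
  · rfl
  exact absurd (_root_.trans hlt hlt') (irrefl β')

lemma exists_isGreatestWrt [IsStrictTotalOrder α r] {S : Set α} (hS : S.Finite)
    (hne : S.Nonempty) : ∃ β, IsGreatestWrt r S β := by
  have hwf := (hS.wellFoundedOn (r := Function.swap r))
  rw [Set.wellFoundedOn_iff] at hwf
  obtain ⟨β, hβ, hmax⟩ := hwf.has_min S hne
  refine ⟨β, hβ, fun γ hγ => ?_⟩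
  rcases trichotomous_of r γ β with h | h | h
  · exact Or.inr h
  · exact Or.inl h
  · exact absurd ⟨h, hγ, hβ⟩ (hmax γ hγ)

end Greatest

section Exponent

variable {r : (Fin n →₀ ℕ) → (Fin n →₀ ℕ) → Prop} {a : Fin n → ℝ} (ha : ∀ i, 0 < a i)
  {f : MvPowerSeries (Fin n) K}
include ha

lemma exponent_isGreatestWrt [IsStrictTotalOrder _ r] (hf : f ≠ 0) :
    IsGreatestWrt r (supp K n (initialForm K n a f)) (exponent K n r a f) := by
  have hex : ∃ β ∈ supp K n (initialForm K n a f),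
      ∀ γ ∈ supp K n (initialForm K n a f), γ = β ∨ r γ β :=
    exists_isGreatestWrt (supp_initialForm_finite ha f) (supp_nonempty (initialForm_ne_zero ha hf))
  rw [exponent, dif_pos hex]
  exact hex.choose_spec

lemma exponent_eq_of_isGreatestWrt [IsStrictTotalOrder _ r] (hf : f ≠ 0) {β : Fin n →₀ ℕ}
    (h : IsGreatestWrt r (supp K n (initialForm K n a f)) β) : exponent K n r a f = β :=
  (exponent_isGreatestWrt ha hf).unique h

lemma exponent_mem_supp [IsStrictTotalOrder _ r] (hf : f ≠ 0) :
    exponent K n r a f ∈ supp K n f :=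
  ((mem_supp_initialForm ha).1 (exponent_isGreatestWrt ha hf).1).1

lemma weight_exponent [IsStrictTotalOrder _ r] (hf : f ≠ 0) :
    weight n a (exponent K n r a f) = ord a f :=
  ((mem_supp_initialForm ha).1 (exponent_isGreatestWrt ha hf).1).2

lemma coeff_exponent_initialForm [IsStrictTotalOrder _ r] (hf : f ≠ 0) :
    coeff (exponent K n r a f) (initialForm K n a f) = coeff (exponent K n r a f) f := by
  rw [coeff_initialForm ha, if_pos (weight_exponent ha hf)]

omit ha in
lemma exponent_smul {c : K} (hc : c ≠ 0) (f : MvPowerSeries (Fin n) K) :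
    exponent K n r a (c • f) = exponent K n r a f := by
  unfold exponent
  rw [initialForm_smul, supp_smul hc]

end Exponent

section MonomialOrder

variable {r : (Fin n →₀ ℕ) → (Fin n →₀ ℕ) → Prop} [IsStrictOrder _ r]
  (hradd : ∀ α β γ : Fin n →₀ ℕ, r α β → r (α + γ) (β + γ))
include hradd

lemma eq_and_eq_or_rel_add {β β' γ γ' : Fin n →₀ ℕ} (hβ : β = β' ∨ r β β')
    (hγ : γ = γ' ∨ r γ γ') : (β = β' ∧ γ = γ') ∨ r (β + γ) (β' + γ') := by
  have hradd' : ∀ {γ γ'} (δ : Fin n →₀ ℕ), r γ γ' → r (δ + γ) (δ + γ') := fun δ h => by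
    simpa only [add_comm δ] using hradd _ _ δ h
  rcases hβ with rfl | hβ <;> rcases hγ with rfl | hγ
  · exact Or.inl ⟨rfl, rfl⟩
  · exact Or.inr (hradd' β hγ)
  · exact Or.inr (hradd _ _ γ hβ)
  · exact Or.inr (_root_.trans (hradd _ _ γ hβ) (hradd' β' hγ))

lemma isGreatestWrt_supp_mul {φ ψ : MvPowerSeries (Fin n) K} {β γ : Fin n →₀ ℕ}
    (hφ : IsGreatestWrt r (supp K n φ) β) (hψ : IsGreatestWrt r (supp K n ψ) γ) :
    IsGreatestWrt r (supp K n (φ * ψ)) (β + γ) := by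
  classical
  have htop : coeff (β + γ) (φ * ψ) = coeff β φ * coeff γ ψ := by
    rw [coeff_mul, Finset.sum_eq_single_of_mem (β, γ)
      (Finset.HasAntidiagonal.mem_antidiagonal.2 rfl)]
    rintro ⟨β', γ'⟩ hsum hne
    rw [Finset.HasAntidiagonal.mem_antidiagonal] at hsum
    by_contra hcoeff
    rcases eq_and_eq_or_rel_add hradd (hφ.2 β' (left_ne_zero_of_mul hcoeff))
      (hψ.2 γ' (right_ne_zero_of_mul hcoeff)) with ⟨rfl, rfl⟩ | hlt
    · exact hne rfl
    · exact irrefl _ (hsum ▸ hlt)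
  refine ⟨by rw [mem_supp, htop]; exact mul_ne_zero hφ.1 hψ.1, fun δ hδ => ?_⟩
  obtain ⟨β', hβ', γ', hγ', rfl⟩ := exists_add_eq_of_mem_supp_mul hδ
  rcases eq_and_eq_or_rel_add hradd (hφ.2 β' hβ') (hψ.2 γ' hγ') with ⟨rfl, rfl⟩ | hlt
  · exact Or.inl rfl
  · exact Or.inr hlt

end MonomialOrder

section ExponentMul

variable {r : (Fin n →₀ ℕ) → (Fin n →₀ ℕ) → Prop} [IsStrictTotalOrder _ r]
  {a : Fin n → ℝ} (ha : ∀ i, 0 < a i) {f g : MvPowerSeries (Fin n) K}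
include ha

lemma exponent_mul (hradd : ∀ α β γ : Fin n →₀ ℕ, r α β → r (α + γ) (β + γ))
    (hf : f ≠ 0) (hg : g ≠ 0) :
    exponent K n r a (f * g) = exponent K n r a f + exponent K n r a g := by
  refine exponent_eq_of_isGreatestWrt ha (mul_ne_zero hf hg) ?_
  rw [initialForm_mul ha]
  exact isGreatestWrt_supp_mul hradd (exponent_isGreatestWrt ha hf) (exponent_isGreatestWrt ha hg)

lemma exponent_one : exponent K n r a 1 = 0 := by
  classical
  refine exponent_eq_of_isGreatestWrt ha one_ne_zero ?_
  rw [initialForm_one ha]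
  refine ⟨by simp [mem_supp], fun γ hγ => Or.inl ?_⟩
  by_contra h
  exact hγ (by rw [coeff_one, if_neg h])

lemma initialForm_sub_and_rel_exponent_sub (hf : f ≠ 0) (hg : g ≠ 0)
    (hexp : exponent K n r a g = exponent K n r a f)
    (hcoeff : coeff (exponent K n r a f) g = coeff (exponent K n r a f) f)
    (hne : initialForm K n a f ≠ initialForm K n a g) :
    initialForm K n a (f - g) = initialForm K n a f - initialForm K n a g ∧
      r (exponent K n r a (f - g)) (exponent K n r a f) := by
  have hord : ord a f = ord a g := by
    rw [← weight_exponent (r := r) ha hf, ← hexp, weight_exponent ha hg]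
  have hsub := initialForm_sub_of_ord_eq ha hord hne
  refine ⟨hsub, ?_⟩
  have hfg : f - g ≠ 0 := fun h => hne (by rw [sub_eq_zero.1 h])
  have hmem := (exponent_isGreatestWrt (r := r) ha hfg).1
  have hg' : coeff (exponent K n r a f) (initialForm K n a g) = coeff (exponent K n r a f) f := by
    rw [← hexp, coeff_exponent_initialForm ha hg, hexp, hcoeff]
  have hcancel : exponent K n r a (f - g) ≠ exponent K n r a f := by
    intro heq
    apply hmem
    rw [hsub, heq, map_sub, coeff_exponent_initialForm ha hf, hg', sub_self]
  rw [hsub] at hmem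
  rcases mem_supp_or_of_mem_supp_sub hmem with h | h
  · exact ((exponent_isGreatestWrt ha hf).2 _ h).resolve_left hcancel
  · exact (hexp ▸ (exponent_isGreatestWrt ha hg).2 _ h).resolve_left hcancel

end ExponentMul

section ClosedAdjoin

variable {S T : Set (MvPowerSeries (Fin n) K)} {f : MvPowerSeries (Fin n) K}

lemma subset_closedAdjoin (S : Set (MvPowerSeries (Fin n) K)) : S ⊆ closedAdjoin K n S :=
  fun f hf _ => ⟨f, Algebra.subset_adjoin hf, by rw [sub_self]; exact zero_mem _⟩

lemma adjoin_le_closedAdjoin (S : Set (MvPowerSeries (Fin n) K)) :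
    Algebra.adjoin K S ≤ closedAdjoin K n S :=
  Algebra.adjoin_le (subset_closedAdjoin S)

lemma closedAdjoin_le (h : S ⊆ closedAdjoin K n T) : closedAdjoin K n S ≤ closedAdjoin K n T := by
  intro f hf N
  obtain ⟨p, hp, hfp⟩ := hf N
  obtain ⟨q, hq, hpq⟩ := Algebra.adjoin_le h hp N
  exact ⟨q, hq, by simpa using add_mem hfp hpq⟩

lemma mIdeal_le_ker_constantCoeff : mIdeal K n ≤ RingHom.ker (constantCoeff (R := K)) :=
  Ideal.span_le.2 <| by rintro _ ⟨i, rfl⟩; simp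

lemma le_order_of_mem_mIdeal_pow {N : ℕ} (h : f ∈ mIdeal K n ^ N) : (N : ℕ∞) ≤ f.order := by
  induction h using Submodule.pow_induction_on_left' with
  | algebraMap c => simp
  | add x y i _ _ hx hy => exact (le_min hx hy).trans min_order_le_add
  | mem_mul x hx i y _ hy =>
    have h1 : 1 ≤ x.order :=
      one_le_order_iff_constCoeff_eq_zero.2 (mIdeal_le_ker_constantCoeff hx)
    calc ((i + 1 : ℕ) : ℕ∞) = 1 + i := by push_cast; ring
      _ ≤ x.order + y.order := add_le_add h1 hy
      _ ≤ (x * y).order := le_order_mul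

lemma exists_mem_adjoin_coeff_eq (hf : f ∈ closedAdjoin K n S) (α : Fin n →₀ ℕ) :
    ∃ q ∈ Algebra.adjoin K S, coeff α q = coeff α f := by
  obtain ⟨q, hq, hfq⟩ := hf (α.degree + 1)
  refine ⟨q, hq, (sub_eq_zero.1 ?_).symm⟩
  rw [← map_sub]
  exact coeff_of_lt_order <| lt_of_lt_of_le (by exact_mod_cast Nat.lt_succ_self _)
    (le_order_of_mem_mIdeal_pow hfq)

lemma supp_subset_of_mem_adjoin {M : AddSubmonoid (Fin n →₀ ℕ)}
    (hS : ∀ s ∈ S, supp K n s ⊆ M) (hf : f ∈ Algebra.adjoin K S) : supp K n f ⊆ M := by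
  induction hf using Algebra.adjoin_induction with
  | mem s hs => exact hS s hs
  | algebraMap c =>
    intro α hα
    classical
    rw [mem_supp, MvPowerSeries.algebraMap_apply, Algebra.algebraMap_self, RingHom.id_apply,
      coeff_C] at hα
    obtain rfl : α = 0 := by by_contra h; exact hα (if_neg h)
    exact M.zero_mem
  | add x y _ _ hx hy =>
    intro α hα
    exact (mem_supp_or_of_mem_supp_add hα).elim (@hx α) (@hy α)
  | mul x y _ _ hx hy =>
    intro α hα
    obtain ⟨β, hβ, γ, hγ, rfl⟩ := exists_add_eq_of_mem_supp_mul hα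
    exact M.add_mem (hx hβ) (hy hγ)

end ClosedAdjoin

section Closure

variable {r : (Fin n →₀ ℕ) → (Fin n →₀ ℕ) → Prop} {a : Fin n → ℝ} (ha : ∀ i, 0 < a i)
  {ι : Type*} {g : ι → MvPowerSeries (Fin n) K}
include ha

lemma initialForm_mem_adjoin_of_mem_closure {P : MvPowerSeries (Fin n) K}
    (hP : P ∈ Submonoid.closure (Set.range g)) :
    initialForm K n a P ∈ Algebra.adjoin K (Set.range fun i => initialForm K n a (g i)) := by
  induction hP using Submonoid.closure_induction with
  | mem _ h => obtain ⟨i, rfl⟩ := h; exact Algebra.subset_adjoin ⟨i, rfl⟩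
  | one => rw [initialForm_one ha]; exact one_mem _
  | mul _ _ _ _ hP hQ => rw [initialForm_mul ha]; exact mul_mem hP hQ

lemma exists_mem_closure_exponent_eq [IsStrictTotalOrder _ r]
    (hradd : ∀ α β γ : Fin n →₀ ℕ, r α β → r (α + γ) (β + γ)) (hg : ∀ i, g i ≠ 0)
    {β : Fin n →₀ ℕ} (hβ : β ∈ AddSubmonoid.closure (Set.range fun i => exponent K n r a (g i))) :
    ∃ P ∈ Submonoid.closure (Set.range g), P ≠ 0 ∧ exponent K n r a P = β := by
  induction hβ using AddSubmonoid.closure_induction with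
  | mem _ h => obtain ⟨i, rfl⟩ := h; exact ⟨g i, Submonoid.subset_closure ⟨i, rfl⟩, hg i, rfl⟩
  | zero => exact ⟨1, one_mem _, one_ne_zero, exponent_one ha⟩
  | add _ _ _ _ hβ hγ =>
    obtain ⟨P, hP, hP0, rfl⟩ := hβ
    obtain ⟨Q, hQ, hQ0, rfl⟩ := hγ
    exact ⟨P * Q, mul_mem hP hQ, mul_ne_zero hP0 hQ0, exponent_mul ha hradd hP0 hQ0⟩

end Closure

section CanonicalBasis

variable {r : (Fin n →₀ ℕ) → (Fin n →₀ ℕ) → Prop} [IsStrictTotalOrder _ r] {a : Fin n → ℝ}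
  (ha : ∀ i, 0 < a i) {A : Subalgebra K (MvPowerSeries (Fin n) K)} {m : ℕ}
  {g : Fin m → MvPowerSeries (Fin n) K} {f : MvPowerSeries (Fin n) K}
include ha

lemma exponent_mem_closure (hg : IsCanonicalBasis K n r a A g) (hfA : f ∈ A) (hf : f ≠ 0) :
    exponent K n r a f ∈ AddSubmonoid.closure (Set.range fun i => exponent K n r a (g i)) := by
  have hM : leadMon K n r a f ∈ closedAdjoin K n (Set.range fun i => leadMon K n r a (g i)) :=
    hg.2 ▸ subset_closedAdjoin _ ⟨f, hfA, hf, rfl⟩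
  obtain ⟨q, hq, hqf⟩ := exists_mem_adjoin_coeff_eq hM (exponent K n r a f)
  refine supp_subset_of_mem_adjoin ?_ hq ?_
  · rintro _ ⟨i, rfl⟩ β hβ
    rw [eq_of_mem_supp_monomial hβ]
    exact AddSubmonoid.subset_closure ⟨i, rfl⟩
  · rw [mem_supp, hqf, leadMon, coeff_monomial_same]
    exact exponent_mem_supp ha hf

lemma exists_initialForm_mem_adjoin_same_leading_term
    (hradd : ∀ α β γ : Fin n →₀ ℕ, r α β → r (α + γ) (β + γ))
    (hg : IsCanonicalBasis K n r a A g) (hfA : f ∈ A) (hf : f ≠ 0) :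
    ∃ h ∈ A, h ≠ 0 ∧
      initialForm K n a h ∈ Algebra.adjoin K (Set.range fun i => initialForm K n a (g i)) ∧
      exponent K n r a h = exponent K n r a f ∧
      coeff (exponent K n r a f) h = coeff (exponent K n r a f) f := by
  obtain ⟨P, hP, hP0, hPf⟩ := exists_mem_closure_exponent_eq ha hradd (fun i => (hg.1 i).2)
    (exponent_mem_closure ha hg hfA hf)
  have hPA : P ∈ A :=
    Submonoid.closure_le.2 (by rintro _ ⟨i, rfl⟩; exact (hg.1 i).1) hP
  have hcP : coeff (exponent K n r a f) P ≠ 0 := hPf ▸ exponent_mem_supp ha hP0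
  set c := coeff (exponent K n r a f) f / coeff (exponent K n r a f) P
  have hc : c ≠ 0 := div_ne_zero (exponent_mem_supp ha hf) hcP
  refine ⟨c • P, A.smul_mem hPA c, smul_ne_zero hc hP0, ?_, by rw [exponent_smul hc, hPf], ?_⟩
  · rw [initialForm_smul]
    exact Subalgebra.smul_mem _ (initialForm_mem_adjoin_of_mem_closure ha hP) c
  · rw [coeff_smul, div_mul_cancel₀ _ hcP]

end CanonicalBasis

theorem initialForm_mem_adjoin {r : (Fin n →₀ ℕ) → (Fin n →₀ ℕ) → Prop} [IsWellOrder _ r]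
    (hradd : ∀ α β γ : Fin n →₀ ℕ, r α β → r (α + γ) (β + γ)) {a : Fin n → ℝ}
    (ha : ∀ i, 0 < a i) {A : Subalgebra K (MvPowerSeries (Fin n) K)} {m : ℕ}
    {g : Fin m → MvPowerSeries (Fin n) K} (hg : IsCanonicalBasis K n r a A g)
    {f : MvPowerSeries (Fin n) K} (hfA : f ∈ A) :
    initialForm K n a f ∈ Algebra.adjoin K (Set.range fun i => initialForm K n a (g i)) := by
  induction hβ : exponent K n r a f using IsWellFounded.induction r generalizing f with
  | _ β IH =>
    rcases eq_or_ne f 0 with rfl | hf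
    · rw [initialForm_zero]
      exact zero_mem _
    obtain ⟨h, hhA, hh0, hh, hexp, hcoeff⟩ :=
      exists_initialForm_mem_adjoin_same_leading_term ha hradd hg hfA hf
    by_cases heq : initialForm K n a f = initialForm K n a h
    · rwa [heq]
    obtain ⟨hsub, hlt⟩ := initialForm_sub_and_rel_exponent_sub ha hf hh0 hexp hcoeff heq
    rw [← sub_add_cancel (initialForm K n a f) (initialForm K n a h), ← hsub]
    exact add_mem (IH _ (hβ ▸ hlt) (A.sub_mem hfA hhA) rfl) hh

theorem inAlgebra_eq_closedAdjoin_initialForms_general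
    (r : (Fin n →₀ ℕ) → (Fin n →₀ ℕ) → Prop) (hr : IsWellOrder (Fin n →₀ ℕ) r)
    (hradd : ∀ α β γ : Fin n →₀ ℕ, r α β → r (α + γ) (β + γ))
    (A : Subalgebra K (MvPowerSeries (Fin n) K))
    (a : Fin n → ℝ) (ha : ∀ i, 0 < a i)
    (m : ℕ) (g : Fin m → MvPowerSeries (Fin n) K)
    (hg : IsReducedCanonicalBasis K n r a A g) :
    inAlgebra K n a (A : Set (MvPowerSeries (Fin n) K)) =
      closedAdjoin K n (Set.range fun i => initialForm K n a (g i)) := by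
  have := hr
  have hcan := hg.1.1
  refine le_antisymm (closedAdjoin_le ?_) (closedAdjoin_le ?_)
  · rintro _ ⟨f, hfA, -, rfl⟩
    exact adjoin_le_closedAdjoin _ (initialForm_mem_adjoin hradd ha hcan hfA)
  · rintro _ ⟨i, rfl⟩
    exact subset_closedAdjoin _ ⟨g i, (hcan.1 i).1, (hcan.1 i).2, rfl⟩

/-- `in(A,a)` is generated by the initial forms of an `a`-reduced canonical
basis of `A`. -/
theorem inAlgebra_eq_closedAdjoin_initialForms
    (r : (Fin n →₀ ℕ) → (Fin n →₀ ℕ) → Prop) (hr : IsWellOrder (Fin n →₀ ℕ) r)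
    (hradd : ∀ α β γ : Fin n →₀ ℕ, r α β → r (α + γ) (β + γ))
    (s : ℕ) (f : Fin s → MvPowerSeries (Fin n) K) (hf : ∀ i, f i ≠ 0)
    (A : Subalgebra K (MvPowerSeries (Fin n) K)) (hA : A = closedAdjoin K n (Set.range f))
    (hlen : FiniteColength K n A)
    (a : Fin n → ℝ) (ha : ∀ i, 0 < a i)
    (m : ℕ) (g : Fin m → MvPowerSeries (Fin n) K)
    (hg : IsReducedCanonicalBasis K n r a A g) :
    inAlgebra K n a (A : Set (MvPowerSeries (Fin n) K)) =
      closedAdjoin K n (Set.range fun i => initialForm K n a (g i)) :=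
  inAlgebra_eq_closedAdjoin_initialForms_general r hr hradd A a ha m g hg

end CanonicalFan
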